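/- Let K and Q be nonempty finite index sets, and for k ∈ K, q ∈ Q let g_{k,q} ≥ 0 with g_k* := max_{q∈Q} g_{k,q} > 0, let E_k > 0, T > 0 and σ² > 0. (a) For any τ_{k,q} > 0 with Σ_{k∈K} Σ_{q∈Q} τ_{k,q} ≤ T and any p_{k,q} ≥ 0 with Σ_{q∈Q} τ_{k,q}·p_{k,q} ≤ E_k for every k, it holds that Σ_{k∈K} Σ_{q∈Q} τ_{k,q}·log₂(1 + p_{k,q}·g_{k,q}/σ²) ≤ T·log₂(1 + Σ_{k∈K} E_k·g_k*/(T·σ²)). (b) This bound is attained: choosing for each k an index q_k achieving g_{k,q_k} = g_k*, setting τ_{k,q_k} = T·E_k·g_k*/(Σ_{j∈K} E_j·g_j*) with all other τ_{k,q} equal to zero (their terms contributing zero), and p_{k,q_k} = E_k/τ_{k,q_k}, achieves equality. -/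

import Mathlib

/-! Giving the idle part `1 - Σ τ/T` of the frame zero SNR, Jensen's inequality for the concave map
`x ↦ log₂(1 + x)` with weights `τ_{k,q}/T` bounds the sum rate by `T·log₂(1 + Σ τ p g/(T σ²))`,
and the received energy `Σ τ p g` is at most `Σ_k E_k g_k*`. Equality holds when each device uses
only a best beamformer with time share proportional to `E_k g_k*`: all devices then see the same
SNR `Σ_j E_j g_j*/(T σ²)`, so Jensen's inequality is tight. -/

open Real Finset

theorem concaveOn_logb_one_add {b : ℝ} (hb : 1 ≤ b) :
    ConcaveOn ℝ (Set.Ioi (-1)) fun x ↦ logb b (1 + x) := by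
  have h := (strictConcaveOn_log_Ioi.concaveOn.smul (inv_nonneg.2 (log_nonneg hb))).translate_right
    (1 : ℝ)
  have hdom : (fun z : ℝ ↦ 1 + z) ⁻¹' Set.Ioi 0 = Set.Ioi (-1) := by
    ext x; simp only [Set.mem_preimage, Set.mem_Ioi]; constructor <;> intro <;> linarith
  have hfun : ((fun y ↦ (log b)⁻¹ • log y) ∘ fun z ↦ 1 + z) = fun x ↦ logb b (1 + x) := by
    ext x; simp only [Function.comp, smul_eq_mul, logb, inv_mul_eq_div]
  rwa [hdom, hfun] at h

theorem ConcaveOn.sum_mul_le_mul_map_sum_div {ι : Type*} {s : Finset ι} {D : Set ℝ} {f : ℝ → ℝ}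
    (hf : ConcaveOn ℝ D f) (h0 : 0 ∈ D) (hf0 : 0 ≤ f 0) {τ x : ι → ℝ} {T : ℝ} (hT : 0 < T)
    (hτ : ∀ i ∈ s, 0 ≤ τ i) (hτT : ∑ i ∈ s, τ i ≤ T) (hx : ∀ i ∈ s, x i ∈ D) :
    ∑ i ∈ s, τ i * f (x i) ≤ T * f ((∑ i ∈ s, τ i * x i) / T) := by
  have hslack : 0 ≤ 1 - ∑ i ∈ s, τ i / T := by
    rw [← sum_div, sub_nonneg, div_le_one hT]; exact hτT
  have hjensen := hf.map_add_sum_le (w := fun i ↦ τ i / T) (fun i hi ↦ div_nonneg (hτ i hi) hT.le)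
    (sub_add_cancel _ _) hx hslack h0
  simp only [smul_eq_mul, mul_zero, zero_add] at hjensen
  calc ∑ i ∈ s, τ i * f (x i) = T * ∑ i ∈ s, τ i / T * f (x i) := by
        rw [mul_sum]; refine sum_congr rfl fun i _ ↦ ?_; field_simp
    _ ≤ T * f (∑ i ∈ s, τ i / T * x i) := by
        gcongr; linarith [mul_nonneg hslack hf0]
    _ = T * f ((∑ i ∈ s, τ i * x i) / T) := by
        rw [sum_div]; congr 2; refine sum_congr rfl fun i _ ↦ ?_; ring

theorem sum_mul_le_of_le_of_sum_le {ι : Type*} {s : Finset ι} {a c : ι → ℝ} {A C : ℝ}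
    (ha : ∀ i ∈ s, 0 ≤ a i) (hc : ∀ i ∈ s, c i ≤ C) (hC : 0 ≤ C) (hA : ∑ i ∈ s, a i ≤ A) :
    ∑ i ∈ s, a i * c i ≤ A * C :=
  calc ∑ i ∈ s, a i * c i ≤ ∑ i ∈ s, a i * C :=
        sum_le_sum fun i hi ↦ mul_le_mul_of_nonneg_left (hc i hi) (ha i hi)
    _ = (∑ i ∈ s, a i) * C := sum_mul ..|>.symm
    _ ≤ A * C := by gcongr

section Offloading

variable {K Q : Type*} [Fintype K] [Fintype Q] {g : K → Q → ℝ} {gstar E : K → ℝ} {T σ2 : ℝ}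

theorem sum_mul_logb_le (hg : ∀ k q, 0 ≤ g k q) (hgle : ∀ k q, g k q ≤ gstar k)
    (hgstar : ∀ k, 0 ≤ gstar k) (hT : 0 < T) (hσ : 0 ≤ σ2) {τ p : K → Q → ℝ}
    (hτ : ∀ k q, 0 ≤ τ k q) (hτT : ∑ k, ∑ q, τ k q ≤ T) (hp : ∀ k q, 0 ≤ p k q)
    (hE : ∀ k, ∑ q, τ k q * p k q ≤ E k) :
    ∑ k, ∑ q, τ k q * logb 2 (1 + p k q * g k q / σ2) ≤
      T * logb 2 (1 + (∑ k, E k * gstar k) / (T * σ2)) := by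
  have hsnr : ∀ i : K × Q, p i.1 i.2 * g i.1 i.2 / σ2 ∈ Set.Ioi (-1) := fun i ↦
    Set.mem_Ioi.2 <| by have := div_nonneg (mul_nonneg (hp i.1 i.2) (hg i.1 i.2)) hσ; linarith
  have hreceived : ∑ k, ∑ q, τ k q * (p k q * g k q) ≤ ∑ k, E k * gstar k :=
    sum_le_sum fun k _ ↦ by
      simp only [← mul_assoc]
      exact sum_mul_le_of_le_of_sum_le (fun q _ ↦ mul_nonneg (hτ k q) (hp k q))
        (fun q _ ↦ hgle k q) (hgstar k) (hE k)
  rw [← Fintype.sum_prod_type'] at hτT ⊢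
  calc ∑ i : K × Q, τ i.1 i.2 * logb 2 (1 + p i.1 i.2 * g i.1 i.2 / σ2)
      ≤ T * logb 2 (1 + (∑ i : K × Q, τ i.1 i.2 * (p i.1 i.2 * g i.1 i.2 / σ2)) / T) :=
        (concaveOn_logb_one_add one_le_two).sum_mul_le_mul_map_sum_div (by norm_num) (by simp)
          hT (fun i _ ↦ hτ i.1 i.2) hτT (fun i _ ↦ hsnr i)
    _ ≤ T * logb 2 (1 + (∑ k, E k * gstar k) / (T * σ2)) := by
        have hX : (∑ i : K × Q, τ i.1 i.2 * (p i.1 i.2 * g i.1 i.2 / σ2)) / T =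
            (∑ k, ∑ q, τ k q * (p k q * g k q)) / (T * σ2) := by
          simp only [mul_div_assoc']
          rw [← sum_div, ← Fintype.sum_prod_type', div_div, mul_comm σ2]
        have hreceived_nonneg : 0 ≤ ∑ k, ∑ q, τ k q * (p k q * g k q) := sum_nonneg fun k _ ↦ sum_nonneg fun q _ ↦
          mul_nonneg (hτ k q) (mul_nonneg (hp k q) (hg k q))
        rw [hX]
        gcongr
        · norm_num

theorem exists_schedule_sum_mul_logb_eq [Nonempty K] (hattain : ∀ k, ∃ q, g k q = gstar k)
    (hgpos : ∀ k, 0 < gstar k) (hE : ∀ k, 0 < E k) (hT : 0 < T) :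
    ∃ (qk : K → Q) (τ p : K → Q → ℝ),
      (∀ k, g k (qk k) = gstar k) ∧
      (∀ k q, q ≠ qk k → τ k q = 0) ∧
      (∀ k, τ k (qk k) = T * (E k * gstar k) / (∑ j, E j * gstar j)) ∧
      (∀ k, p k (qk k) = E k / τ k (qk k)) ∧
      (∀ k q, 0 ≤ p k q) ∧
      ∑ k, ∑ q, τ k q * logb 2 (1 + p k q * g k q / σ2) =
        T * logb 2 (1 + (∑ k, E k * gstar k) / (T * σ2)) := by
  classical
  choose qk hqk using hattain
  set S := ∑ j, E j * gstar j
  have hS : 0 < S := sum_pos (fun k _ ↦ mul_pos (hE k) (hgpos k)) univ_nonempty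
  set τ : K → Q → ℝ := fun k q ↦ if q = qk k then T * (E k * gstar k) / S else 0
  set p : K → Q → ℝ := fun k q ↦ if q = qk k then E k / τ k q else 0
  have hτ_pos : ∀ k, 0 < τ k (qk k) := fun k ↦ by
    simp only [τ, if_pos]; have := hE k; have := hgpos k; positivity
  have hsnr : ∀ k, p k (qk k) * g k (qk k) / σ2 = S / (T * σ2) := fun k ↦ by
    simp only [p, τ, if_pos, hqk]; have := (hE k).ne'; have := (hgpos k).ne'; field_simp
  have hτ_sum : ∑ k, τ k (qk k) = T := by
    simp only [τ, if_pos, ← sum_div, ← mul_sum]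
    exact mul_div_cancel_right₀ T hS.ne'
  refine ⟨qk, τ, p, hqk, fun k q hq ↦ if_neg hq, fun k ↦ if_pos rfl, fun k ↦ if_pos rfl,
    fun k q ↦ ?_, ?_⟩
  · simp only [p]; split_ifs with h
    · subst h; exact div_nonneg (hE k).le (hτ_pos k).le
    · rfl
  calc ∑ k, ∑ q, τ k q * logb 2 (1 + p k q * g k q / σ2)
      = ∑ k, τ k (qk k) * logb 2 (1 + S / (T * σ2)) := sum_congr rfl fun k _ ↦ by
        rw [sum_eq_single (qk k) (fun q _ hq ↦ by simp [τ, hq]) (by simp), hsnr]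
    _ = T * logb 2 (1 + S / (T * σ2)) := by rw [← sum_mul, hτ_sum]

end Offloading

theorem stmt7_general {K Q : Type*} [Fintype K] [Fintype Q] [Nonempty K] [Nonempty Q]
    (g : K → Q → ℝ) (hg : ∀ k q, 0 ≤ g k q) (gstar : K → ℝ)
    (hgdef : ∀ k, gstar k = Finset.univ.sup' Finset.univ_nonempty (g k))
    (hgpos : ∀ k, 0 < gstar k) (E : K → ℝ) (hE : ∀ k, 0 < E k)
    (T σ2 : ℝ) (hT : 0 < T) (hσ : 0 < σ2) :
    (∀ τ p : K → Q → ℝ, (∀ k q, 0 < τ k q) →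
      (∑ k, ∑ q, τ k q) ≤ T → (∀ k q, 0 ≤ p k q) →
      (∀ k, ∑ q, τ k q * p k q ≤ E k) →
      ∑ k, ∑ q, τ k q * Real.logb 2 (1 + p k q * g k q / σ2) ≤
        T * Real.logb 2 (1 + (∑ k, E k * gstar k) / (T * σ2))) ∧
    (∃ (qk : K → Q) (τ p : K → Q → ℝ),
      (∀ k, g k (qk k) = gstar k) ∧
      (∀ k q, q ≠ qk k → τ k q = 0) ∧
      (∀ k, τ k (qk k) = T * (E k * gstar k) / (∑ j, E j * gstar j)) ∧
      (∀ k, p k (qk k) = E k / τ k (qk k)) ∧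
      (∀ k q, 0 ≤ p k q) ∧
      ∑ k, ∑ q, τ k q * Real.logb 2 (1 + p k q * g k q / σ2) =
        T * Real.logb 2 (1 + (∑ k, E k * gstar k) / (T * σ2))) := by
  have hgle : ∀ k q, g k q ≤ gstar k := fun k q ↦ hgdef k ▸ le_sup' (g k) (mem_univ q)
  have hattain : ∀ k, ∃ q, g k q = gstar k := fun k ↦ by
    obtain ⟨q, -, hq⟩ := exists_mem_eq_sup' univ_nonempty (g k)
    exact ⟨q, hq.symm.trans (hgdef k).symm⟩
  exact ⟨fun τ p hτ hτT hp hEτ ↦ sum_mul_logb_le hg hgle (fun k ↦ (hgpos k).le) hT hσ.le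
      (fun k q ↦ (hτ k q).le) hτT hp hEτ,
    exists_schedule_sum_mul_logb_eq hattain hgpos hE hT⟩

/-- Lemma 2 combined with the closed-form value (A.5): (a) the sum offloading
rate of all devices is at most `T·log₂(1 + Σ_k E_k·g_k*/(T·σ²))`, where
`g_k* = max_q g_{k,q}`; (b) this bound is attained by letting each device `k`
use only a best IRS beamforming vector `q_k`, with time share proportional to
`E_k·g_k*` and power depleting its whole energy budget. -/
theorem stmt7 {K Q : Type*} [Fintype K] [Fintype Q] [Nonempty K] [Nonempty Q]
    [DecidableEq Q]
    (g : K → Q → ℝ) (hg : ∀ k q, 0 ≤ g k q) (gstar : K → ℝ)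
    (hgdef : ∀ k, gstar k = Finset.univ.sup' Finset.univ_nonempty (g k))
    (hgpos : ∀ k, 0 < gstar k) (E : K → ℝ) (hE : ∀ k, 0 < E k)
    (T σ2 : ℝ) (hT : 0 < T) (hσ : 0 < σ2) :
    (∀ τ p : K → Q → ℝ, (∀ k q, 0 < τ k q) →
      (∑ k, ∑ q, τ k q) ≤ T → (∀ k q, 0 ≤ p k q) →
      (∀ k, ∑ q, τ k q * p k q ≤ E k) →
      ∑ k, ∑ q, τ k q * Real.logb 2 (1 + p k q * g k q / σ2) ≤
        T * Real.logb 2 (1 + (∑ k, E k * gstar k) / (T * σ2))) ∧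
    (∃ (qk : K → Q) (τ p : K → Q → ℝ),
      (∀ k, g k (qk k) = gstar k) ∧
      (∀ k q, q ≠ qk k → τ k q = 0) ∧
      (∀ k, τ k (qk k) = T * (E k * gstar k) / (∑ j, E j * gstar j)) ∧
      (∀ k, p k (qk k) = E k / τ k (qk k)) ∧
      (∀ k q, 0 ≤ p k q) ∧
      ∑ k, ∑ q, τ k q * Real.logb 2 (1 + p k q * g k q / σ2) =
        T * Real.logb 2 (1 + (∑ k, E k * gstar k) / (T * σ2))) :=
  stmt7_general g hg gstar hgdef hgpos E hE T σ2 hT hσ
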